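/- Let x : [0,T] → ℝ³ be a piecewise C¹ unit-speed curve, and let n_x, n_y, n_z be the number of times the first, second, and third coordinates respectively cross between distinct integer levels. Then n_x + n_y + n_z ≤ √3 · T + 3. Consequently, limsup_{T→∞} (n_x + n_y + n_z)/T ≤ √3. -/

import Mathlib

/-!
Between consecutive crossing times coordinate `i` moves from one integer to a different one,
so by the fundamental theorem of calculus each crossing costs at least `1` of `∫ |xᵢ'|`.
Summing over the three coordinates and using `|v₁| + |v₂| + |v₃| ≤ √3 ‖v‖ = √3` pointwise
bounds the total number of crossings by `√3 T`.
-/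

open MeasureTheory Set
open scoped Interval

theorem intervalIntegral.sum_integral_adjacent_intervals_fin {E : Type*} [NormedAddCommGroup E]
    [NormedSpace ℝ E] {μ : Measure ℝ} {f : ℝ → E} {n : ℕ} {s : Fin (n + 1) → ℝ}
    (hint : ∀ j : Fin n, IntervalIntegrable f μ (s j.castSucc) (s j.succ)) :
    ∑ j : Fin n, ∫ x in s j.castSucc..s j.succ, f x ∂μ = ∫ x in s 0..s (Fin.last n), f x ∂μ := by
  set u : ℕ → ℝ := fun k => s (Fin.clamp k n)
  have hu : ∀ j : Fin n, u j = s j.castSucc ∧ u (j + 1) = s j.succ := fun j =>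
    ⟨congrArg s (Fin.ext (by simp [j.isLt.le])), congrArg s (Fin.ext (by simp [j.isLt]))⟩
  calc ∑ j : Fin n, ∫ x in s j.castSucc..s j.succ, f x ∂μ
      = ∑ k ∈ Finset.range n, ∫ x in u k..u (k + 1), f x ∂μ := by
        rw [← Fin.sum_univ_eq_sum_range]
        exact Finset.sum_congr rfl fun j _ => by rw [(hu j).1, (hu j).2]
    _ = ∫ x in u 0..u n, f x ∂μ := intervalIntegral.sum_integral_adjacent_intervals fun k hk => by
        simpa only [(hu ⟨k, hk⟩).1, (hu ⟨k, hk⟩).2] using hint ⟨k, hk⟩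
    _ = ∫ x in s 0..s (Fin.last n), f x ∂μ := by
        congr 1
        exact congrArg s (Fin.ext (by simp))

theorem sum_abs_le_sqrt_card_mul_norm {ι : Type*} [Fintype ι] (v : EuclideanSpace ℝ ι) :
    ∑ i, |v i| ≤ √(Fintype.card ι) * ‖v‖ := by
  rw [← Real.sqrt_sq (norm_nonneg v), ← Real.sqrt_mul (Nat.cast_nonneg _),
    Real.le_sqrt (Finset.sum_nonneg fun i _ => abs_nonneg _) (by positivity),
    EuclideanSpace.norm_sq_eq]
  simpa [Real.norm_eq_abs] using sq_sum_le_card_mul_sum_sq (s := Finset.univ) (f := fun i => |v i|)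

theorem one_le_abs_sub_of_intCast_ne {a b : ℝ} (ha : ∃ m : ℤ, a = m) (hb : ∃ m : ℤ, b = m)
    (hne : a ≠ b) : 1 ≤ |a - b| := by
  obtain ⟨m, rfl⟩ := ha
  obtain ⟨k, rfl⟩ := hb
  have : m ≠ k := by exact_mod_cast hne
  exact_mod_cast Int.one_le_abs (sub_ne_zero.mpr this)

theorem IntervalIntegrable.of_abs_of_hasDerivAt {g g' : ℝ → ℝ} {a b : ℝ}
    (hg : ∀ t ∈ Ι a b, HasDerivAt g (g' t) t)
    (habs : IntervalIntegrable (fun t => |g' t|) volume a b) :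
    IntervalIntegrable g' volume a b := by
  rw [intervalIntegrable_iff] at habs ⊢
  refine (integrable_norm_iff ((measurable_deriv g).aestronglyMeasurable.congr ?_)).mp habs
  exact (ae_restrict_iff' measurableSet_uIoc).mpr (.of_forall fun t ht => (hg t ht).deriv)

theorem natCast_le_integral_abs_deriv_of_crossings {g g' : ℝ → ℝ} {a b : ℝ} {n : ℕ}
    {s : Fin (n + 1) → ℝ} (hs : Monotone s) (ha : a ≤ s 0) (hb : s (Fin.last n) ≤ b)
    (hg : ∀ t ∈ Icc a b, HasDerivAt g (g' t) t) (hg' : IntervalIntegrable g' volume a b)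
    (hint : ∀ j, ∃ m : ℤ, g (s j) = m) (hne : ∀ j : Fin n, g (s j.succ) ≠ g (s j.castSucc)) :
    (n : ℝ) ≤ ∫ t in a..b, |g' t| := by
  have hab : a ≤ b := ha.trans ((hs (Fin.zero_le _)).trans hb)
  have hmem : ∀ j, s j ∈ Icc a b := fun j =>
    ⟨ha.trans (hs (Fin.zero_le j)), (hs (Fin.le_last j)).trans hb⟩
  have hsub : ∀ j k, [[s j, s k]] ⊆ Icc a b := fun j k => uIcc_subset_Icc (hmem j) (hmem k)
  have hstep : ∀ j : Fin n, 1 ≤ ∫ t in s j.castSucc..s j.succ, |g' t| := fun j =>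
    calc 1 ≤ |g (s j.succ) - g (s j.castSucc)| :=
          one_le_abs_sub_of_intCast_ne (hint _) (hint _) (hne j)
      _ = |∫ t in s j.castSucc..s j.succ, g' t| := by
          rw [intervalIntegral.integral_eq_sub_of_hasDerivAt (fun t ht => hg t (hsub _ _ ht))
            (hg'.mono_set (by rw [uIcc_of_le hab]; exact hsub _ _))]
      _ ≤ ∫ t in s j.castSucc..s j.succ, |g' t| :=
          intervalIntegral.abs_integral_le_integral_abs (hs j.castSucc_le_succ)
  calc (n : ℝ) = ∑ _j : Fin n, 1 := by simp
    _ ≤ ∑ j : Fin n, ∫ t in s j.castSucc..s j.succ, |g' t| := Finset.sum_le_sum fun j _ => hstep j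
    _ = ∫ t in s 0..s (Fin.last n), |g' t| :=
        intervalIntegral.sum_integral_adjacent_intervals_fin fun j =>
          hg'.abs.mono_set (by rw [uIcc_of_le hab]; exact hsub _ _)
    _ ≤ ∫ t in a..b, |g' t| :=
        intervalIntegral.integral_mono_interval ha (hs (Fin.zero_le _)) hb
          (.of_forall fun t => abs_nonneg _) hg'.abs

theorem crossings_le_sqrt_three_mul_time_general
    (T : ℝ) (x v : ℝ → EuclideanSpace ℝ (Fin 3))
    (hderiv : ∀ t ∈ Set.Icc (0 : ℝ) T, HasDerivAt x (v t) t)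
    (hunit : ∀ t ∈ Set.Icc (0 : ℝ) T, ‖v t‖ = 1)
    (hint : ∀ i : Fin 3, IntervalIntegrable (fun t => |v t i|) MeasureTheory.volume 0 T)
    (n : Fin 3 → ℕ) (τ : ∀ i : Fin 3, Fin (n i + 1) → ℝ)
    (hmono : ∀ i, StrictMono (τ i))
    (h0 : ∀ i, 0 ≤ τ i 0) (hlast : ∀ i, τ i (Fin.last (n i)) ≤ T)
    (hint_val : ∀ i j, ∃ m : ℤ, x (τ i j) i = (m : ℝ))
    (hdistinct : ∀ i, ∀ j : Fin (n i), x (τ i j.succ) i ≠ x (τ i j.castSucc) i) :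
    ((n 0 : ℝ) + n 1 + n 2) ≤ Real.sqrt 3 * T + 3 := by
  have hT : 0 ≤ T := (h0 0).trans (((hmono 0).monotone (Fin.zero_le _)).trans (hlast 0))
  have hcoord : ∀ i, ∀ t ∈ Icc 0 T, HasDerivAt (fun t => x t i) (v t i) t := fun i t ht =>
    (EuclideanSpace.proj (𝕜 := ℝ) i).hasFDerivAt.comp_hasDerivAt t (hderiv t ht)
  have hcross : ∀ i, (n i : ℝ) ≤ ∫ t in 0..T, |v t i| := fun i =>
    natCast_le_integral_abs_deriv_of_crossings (hmono i).monotone (h0 i) (hlast i) (hcoord i)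
      ((hint i).of_abs_of_hasDerivAt fun t ht =>
        hcoord i t (Ioc_subset_Icc_self (by rwa [uIoc_of_le hT] at ht))) (hint_val i) (hdistinct i)
  have hspeed : ∫ t in 0..T, ∑ i, |v t i| ≤ √3 * T := by
    simpa [mul_comm] using intervalIntegral.integral_mono_on hT
      (IntervalIntegrable.sum Finset.univ fun i _ => hint i) intervalIntegrable_const fun t ht => by
        simpa [hunit t ht] using sum_abs_le_sqrt_card_mul_norm (v t)
  rw [intervalIntegral.integral_finsetSum fun i _ => hint i, Fin.sum_univ_three] at hspeed
  linarith [hcross 0, hcross 1, hcross 2]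

/-- For a unit-speed piecewise `C¹` curve `x : [0,T] → ℝ³`, if coordinate `i` crosses between
distinct integer levels `n i` times, then `n 0 + n 1 + n 2 ≤ √3 · T + 3`. -/
theorem crossings_le_sqrt_three_mul_time
    (T : ℝ) (hT : 0 < T) (x v : ℝ → EuclideanSpace ℝ (Fin 3))
    (hderiv : ∀ t ∈ Set.Icc (0 : ℝ) T, HasDerivAt x (v t) t)
    (hunit : ∀ t ∈ Set.Icc (0 : ℝ) T, ‖v t‖ = 1)
    (hint : ∀ i : Fin 3, IntervalIntegrable (fun t => |v t i|) MeasureTheory.volume 0 T)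
    (n : Fin 3 → ℕ) (τ : ∀ i : Fin 3, Fin (n i + 1) → ℝ)
    (hmono : ∀ i, StrictMono (τ i))
    (h0 : ∀ i, 0 ≤ τ i 0) (hlast : ∀ i, τ i (Fin.last (n i)) ≤ T)
    (hint_val : ∀ i j, ∃ m : ℤ, x (τ i j) i = (m : ℝ))
    (hdistinct : ∀ i, ∀ j : Fin (n i), x (τ i j.succ) i ≠ x (τ i j.castSucc) i) :
    ((n 0 : ℝ) + n 1 + n 2) ≤ Real.sqrt 3 * T + 3 :=
  crossings_le_sqrt_three_mul_time_general T x v hderiv hunit hint n τ hmono h0 hlast hint_val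
    hdistinct
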